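/- arXiv:1903.07837 — 2 statements merged into one kernel-verified Lean document; each statement's English description precedes it below -/
import Mathlib

section
/- Let M be a two-counter Minsky machine with instruction set I and let (A, R, Rp, A0, ↪) be its APA encoding. If x = (q1, 2, q2, q3) ∈ I, then for all m1 ∈ ℕ, all m2 ≥ 1, and every reference set Ax ⊆ A there exist two consecutive APA transitions F(A^I ∪ {σQ(q1), σ1(m1), σ2(m2)}) ↪^{Ax} F(A^I ∪ {σIc(x), σ1(m1), σ2(m2)}) ↪^{Ax} F(A^I ∪ {σQ(q3), σ1(m1), σ2(m2−1)}), simulating the decrement of the second counter. -/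
/-- A two-counter Minsky machine over a state type `Q`.  An instruction
`(q1, i, q2, u)` has source state `q1 ≠ qf`, counter index `i ∈ {1,2}`,
target state `q2` and optional alternative target `u : Option Q`
(`none` playing the role of `ε`). -/
structure Minsky (Q : Type*) where
  n1 : ℕ
  n2 : ℕ
  q0 : Q
  qf : Q
  I : Set (Q × ℕ × Q × Option Q)
  I_idx : ∀ x ∈ I, x.2.1 = 1 ∨ x.2.1 = 2
  I_src : ∀ x ∈ I, x.1 ≠ qf
  I_total : ∀ q : Q, q ≠ qf → ∃ i q2 u, (q, i, q2, u) ∈ I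

/-- The one-step relation `⇒` of a two-counter Minsky machine. -/
inductive Minsky.Step {Q : Type*} (M : Minsky Q) : Q × ℕ × ℕ → Q × ℕ × ℕ → Prop
  | inc1 {q1 q2 : Q} {m1 m2 : ℕ} : (q1, 1, q2, (none : Option Q)) ∈ M.I →
      M.Step (q1, m1, m2) (q2, m1 + 1, m2)
  | inc2 {q1 q2 : Q} {m1 m2 : ℕ} : (q1, 2, q2, (none : Option Q)) ∈ M.I →
      M.Step (q1, m1, m2) (q2, m1, m2 + 1)
  | dec1 {q1 q2 q3 : Q} {m1 m2 : ℕ} : (q1, 1, q2, some q3) ∈ M.I → 0 < m1 →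
      M.Step (q1, m1, m2) (q3, m1 - 1, m2)
  | dec2 {q1 q2 q3 : Q} {m1 m2 : ℕ} : (q1, 2, q2, some q3) ∈ M.I → 0 < m2 →
      M.Step (q1, m1, m2) (q3, m1, m2 - 1)
  | zero1 {q1 q2 q3 : Q} {m2 : ℕ} : (q1, 1, q2, some q3) ∈ M.I →
      M.Step (q1, 0, m2) (q2, 0, m2)
  | zero2 {q1 q2 q3 : Q} {m1 : ℕ} : (q1, 2, q2, some q3) ∈ M.I →
      M.Step (q1, m1, 0) (q2, m1, 0)

/-- `M.StepN k c c'` says `⇒^k(c) = c'`, i.e. `c'` is obtained from `c`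
by exactly `k` Minsky machine steps. -/
def Minsky.StepN {Q : Type*} (M : Minsky Q) : ℕ → Q × ℕ × ℕ → Q × ℕ × ℕ → Prop
  | 0, c, c' => c = c'
  | k + 1, c, c' => ∃ c'', M.Step c c'' ∧ M.StepN k c'' c'

/-- An Abstract Persuasion Argumentation framework over the argument type `α`:
an attack relation `R`, a persuasion relation `Rp ⊆ A × (A ∪ {ε}) × A`
(`none` playing the role of `ε`), and an initial set `A0`.
A state `F(A1)` is identified with the set `A1 ⊆ A` of visible arguments
(since the state is `(A1, R ∩ (A1 × A1))`, a function of `A1`). -/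
structure APA (α : Type*) where
  R : Set (α × α)
  Rp : Set (α × Option α × α)
  A0 : Set α

namespace APA

variable {α : Type*} (F : APA α)

/-- `a1` attacks `a2` in the state `F(A1)`. -/
def Attacks (A1 : Set α) (a1 a2 : α) : Prop :=
  a1 ∈ A1 ∧ a2 ∈ A1 ∧ (a1, a2) ∈ F.R

/-- `Γ^{Ax}_{F(A1)}`: members `(a1, α, a2)` of `Rp` with `a1 ∈ A1`,
`α ∈ {ε} ∪ A1`, and `a1` not attacked in `F(A1)` by any member of `Ax`. -/
def gamma (Ax A1 : Set α) : Set (α × Option α × α) :=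
  {t | t ∈ F.Rp ∧ t.1 ∈ A1 ∧ (∀ a : α, t.2.1 = some a → a ∈ A1) ∧
    ∀ b ∈ Ax, ¬ F.Attacks A1 b t.1}

/-- `neg^{A1}(Γ)`. -/
def neg (A1 : Set α) (Γ : Set (α × Option α × α)) : Set α :=
  {ax | ax ∈ A1 ∧ ∃ a1 ∈ A1, ∃ a2 : α, (a1, some ax, a2) ∈ Γ}

/-- `pos^{A1}(Γ)`. -/
def pos (A1 : Set α) (Γ : Set (α × Option α × α)) : Set α :=
  {a2 | ∃ a1 ∈ A1, ∃ m : Option α, (∀ a : α, m = some a → a ∈ A1) ∧ (a1, m, a2) ∈ Γ}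

/-- The transition `F(A1) ↪^{Ax} F(A2)` effected by the specific nonempty
`Γ ⊆ Γ^{Ax}_{F(A1)}`. -/
def TransVia (Ax : Set α) (Γ : Set (α × Option α × α)) (A1 A2 : Set α) : Prop :=
  Γ.Nonempty ∧ Γ ⊆ F.gamma Ax A1 ∧ A2 = (A1 \ neg A1 Γ) ∪ pos A1 Γ

/-- The transition relation `F(A1) ↪^{Ax} F(A2)`. -/
def Trans (Ax A1 A2 : Set α) : Prop :=
  ∃ Γ : Set (α × Option α × α), F.TransVia Ax Γ A1 A2

/-- A state `F(A1)` is reachable iff it is obtained from the initial state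
`F(A0)` by a finite sequence of transitions (with arbitrary reference sets). -/
def Reachable (A1 : Set α) : Prop :=
  Relation.ReflTransGen (fun X Y => ∃ Ax : Set α, F.Trans Ax X Y) F.A0 A1

end APA

/-- `sigC σ1 σ2 i` is `σi` for `i ∈ {1, 2}`. -/
def sigC {α : Type*} (σ1 σ2 : ℕ → α) (i : ℕ) : ℕ → α :=
  if i = 1 then σ1 else σ2

/-- The persuasion relation of the APA encoding of a Minsky machine `M`. -/
def encRp {Q α : Type*} (M : Minsky Q) (σ1 σ2 : ℕ → α) (σQ : Q → α)
    (σI σIc : M.I → α) : Set (α × Option α × α) :=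
  {t | (∃ x : M.I, t = (σI x, some (σQ x.val.1), σIc x)) ∨
    (∃ x : M.I, ∃ n : ℕ, x.val.2.2.2 = none ∧
      t = (σIc x, some (sigC σ1 σ2 x.val.2.1 n), sigC σ1 σ2 x.val.2.1 (n + 1))) ∨
    (∃ x : M.I, ∃ n : ℕ, 1 ≤ n ∧ (∃ q3 : Q, x.val.2.2.2 = some q3) ∧
      t = (σIc x, some (sigC σ1 σ2 x.val.2.1 n), sigC σ1 σ2 x.val.2.1 (n - 1))) ∨
    (∃ x : M.I, ∃ n : ℕ, x.val.2.2.2 = none ∧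
      t = (sigC σ1 σ2 x.val.2.1 n, some (σIc x), σQ x.val.2.2.1)) ∨
    (∃ x : M.I, ∃ n : ℕ, 1 ≤ n ∧ ∃ q3 : Q, x.val.2.2.2 = some q3 ∧
      t = (sigC σ1 σ2 x.val.2.1 n, some (σIc x), σQ q3)) ∨
    (∃ x : M.I, ∃ q3 : Q, x.val.2.2.2 = some q3 ∧
      t = (sigC σ1 σ2 x.val.2.1 0, some (σIc x), σQ x.val.2.2.1))}

/-- The APA encoding of a two-counter Minsky machine `M`, over the argument
type `α` (playing the role of the class `A` of arguments): injective maps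
`σ1, σ2, σQ, σI, σIc` with pairwise disjoint ranges covering `α`, an empty
attack relation, the persuasion relation `encRp`, and the initial set
`{σ1 n1, σ2 n2, σQ q0} ∪ A^I`. -/
structure Encoding {Q : Type*} (M : Minsky Q) (α : Type*) extends APA α where
  σ1 : ℕ → α
  σ2 : ℕ → α
  σQ : Q → α
  σI : M.I → α
  σIc : M.I → α
  inj1 : Function.Injective σ1
  inj2 : Function.Injective σ2
  injQ : Function.Injective σQ
  injI : Function.Injective σI
  injIc : Function.Injective σIc
  disjoint_ranges : List.Pairwise Disjoint
    [Set.range σ1, Set.range σ2, Set.range σQ, Set.range σI, Set.range σIc]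
  ranges_cover : Set.range σ1 ∪ Set.range σ2 ∪ Set.range σQ ∪
    Set.range σI ∪ Set.range σIc = Set.univ
  R_empty : toAPA.R = ∅
  Rp_spec : toAPA.Rp = encRp M σ1 σ2 σQ σI σIc
  A0_spec : toAPA.A0 = {σ1 M.n1, σ2 M.n2, σQ M.q0} ∪ Set.range σI

/-- The set of visible arguments of the APA state `F(A^I ∪ {σQ q, σ1 m1, σ2 m2})`
corresponding to the Minsky machine configuration `(q, m1, m2)`. -/
def encState {Q α : Type*} {M : Minsky Q} (E : Encoding M α)
    (q : Q) (m1 m2 : ℕ) : Set α :=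
  Set.range E.σI ∪ {E.σQ q, E.σ1 m1, E.σ2 m2}

/-- The set of visible arguments of the intermediate APA state
`F(A^I ∪ {σIc x, σ1 m1, σ2 m2})`. -/
def encStateC {Q α : Type*} {M : Minsky Q} (E : Encoding M α)
    (x : M.I) (m1 m2 : ℕ) : Set α :=
  Set.range E.σI ∪ {E.σIc x, E.σ1 m1, E.σ2 m2}

/-!
The first transition fires the instruction argument `σI x` on the state argument `σQ q1`,
replacing it by the control argument `σIc x`. In the second, `σIc x` and `σ2 m2` persuade each
other simultaneously: `σIc x` turns `σ2 m2` into `σ2 (m2 - 1)` while `σ2 m2` turns `σIc x` into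
`σQ q3`. Since the five families of arguments are disjoint, no other visible argument is touched.
-/

namespace APA

variable {α : Type*} {F : APA α} {Ax A1 : Set α} {Γ : Set (α × Option α × α)}

lemma mk_mem_gamma_of_R_empty (hR : F.R = ∅) {a b c : α} (h : (a, some b, c) ∈ F.Rp)
    (ha : a ∈ A1) (hb : b ∈ A1) : (a, some b, c) ∈ F.gamma Ax A1 :=
  ⟨h, ha, fun _ e => Option.some_inj.mp e ▸ hb, fun _ _ hatt => by simpa [hR] using hatt.2.2⟩

lemma neg_eq_of_subset_gamma (hΓ : Γ ⊆ F.gamma Ax A1) :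
    neg A1 Γ = {b | ∃ a c, (a, some b, c) ∈ Γ} := by
  ext b
  constructor
  · rintro ⟨-, a, -, c, h⟩
    exact ⟨a, c, h⟩
  · rintro ⟨a, c, h⟩
    exact ⟨(hΓ h).2.2.1 b rfl, a, (hΓ h).2.1, c, h⟩

lemma pos_eq_of_subset_gamma (hΓ : Γ ⊆ F.gamma Ax A1) :
    pos A1 Γ = {c | ∃ a m, (a, m, c) ∈ Γ} := by
  ext c
  constructor
  · rintro ⟨a, -, m, -, h⟩
    exact ⟨a, m, h⟩
  · rintro ⟨a, m, h⟩
    exact ⟨a, (hΓ h).2.1, m, (hΓ h).2.2.1, h⟩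

lemma trans_of_subset_gamma (hne : Γ.Nonempty) (hΓ : Γ ⊆ F.gamma Ax A1) :
    F.Trans Ax A1 ((A1 \ {b | ∃ a c, (a, some b, c) ∈ Γ}) ∪ {c | ∃ a m, (a, m, c) ∈ Γ}) :=
  ⟨Γ, hne, hΓ, by rw [neg_eq_of_subset_gamma hΓ, pos_eq_of_subset_gamma hΓ]⟩

lemma trans_of_mem_gamma_of_mem_gamma {a b c a' b' c' : α}
    (h : (a, some b, c) ∈ F.gamma Ax A1) (h' : (a', some b', c') ∈ F.gamma Ax A1) :
    F.Trans Ax A1 ((A1 \ {b, b'}) ∪ {c, c'}) := by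
  have hneg : {y | ∃ x z, (x, some y, z) ∈ ({(a, some b, c), (a', some b', c')} : Set _)} =
      {b, b'} := by
    ext; aesop
  have hpos : {z | ∃ x m, (x, m, z) ∈ ({(a, some b, c), (a', some b', c')} : Set _)} =
      {c, c'} := by
    ext; aesop
  simpa only [hneg, hpos] using trans_of_subset_gamma (Set.insert_nonempty _ _)
    (Set.insert_subset h (Set.singleton_subset_iff.mpr h'))

lemma trans_of_mem_gamma {a b c : α} (h : (a, some b, c) ∈ F.gamma Ax A1) :
    F.Trans Ax A1 ((A1 \ {b}) ∪ {c}) := by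
  simpa using trans_of_mem_gamma_of_mem_gamma h h

end APA

namespace Encoding

variable {Q α : Type*} {M : Minsky Q} (E : Encoding M α)

lemma instr_mem_Rp (x : M.I) : (E.σI x, some (E.σQ x.val.1), E.σIc x) ∈ E.Rp := by
  rw [E.Rp_spec]
  exact Or.inl ⟨x, rfl⟩

lemma counter_dec_mem_Rp {x : M.I} {q3 : Q} (hx : x.val.2.2.2 = some q3) {n : ℕ} (hn : 1 ≤ n) :
    (E.σIc x, some (sigC E.σ1 E.σ2 x.val.2.1 n), sigC E.σ1 E.σ2 x.val.2.1 (n - 1)) ∈ E.Rp := by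
  rw [E.Rp_spec]
  exact Or.inr (Or.inr (Or.inl ⟨x, n, hn, ⟨q3, hx⟩, rfl⟩))

lemma state_dec_mem_Rp {x : M.I} {q3 : Q} (hx : x.val.2.2.2 = some q3) {n : ℕ} (hn : 1 ≤ n) :
    (sigC E.σ1 E.σ2 x.val.2.1 n, some (E.σIc x), E.σQ q3) ∈ E.Rp := by
  rw [E.Rp_spec]
  exact Or.inr (Or.inr (Or.inr (Or.inr (Or.inl ⟨x, n, hn, q3, hx, rfl⟩))))

lemma ranges_disjoint :
    (∀ i j, E.σ1 i ≠ E.σ2 j) ∧ (∀ i q, E.σ1 i ≠ E.σQ q) ∧ (∀ i x, E.σ1 i ≠ E.σIc x) ∧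
    (∀ i q, E.σ2 i ≠ E.σQ q) ∧ (∀ i x, E.σ2 i ≠ E.σI x) ∧
    (∀ q x, E.σQ q ≠ E.σI x) ∧ (∀ x y, E.σI x ≠ E.σIc y) := by
  have h := E.disjoint_ranges
  simp only [List.pairwise_cons, List.mem_cons, List.not_mem_nil, or_false, forall_eq_or_imp,
    forall_eq, List.Pairwise.nil, and_true, Set.disjoint_range_iff] at h
  tauto

lemma encState_sdiff_union (q : Q) (x : M.I) (m1 m2 : ℕ) :
    (encState E q m1 m2 \ {E.σQ q}) ∪ {E.σIc x} = encStateC E x m1 m2 := by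
  obtain ⟨-, h1Q, -, h2Q, -, hQI, -⟩ := E.ranges_disjoint
  ext a
  simp only [encState, encStateC, Set.mem_union, Set.mem_sdiff, Set.mem_insert_iff,
    Set.mem_singleton_iff, Set.mem_range]
  constructor
  · rintro (⟨(⟨y, rfl⟩ | rfl | rfl | rfl), hne⟩ | rfl) <;> simp_all
  · rintro (⟨y, rfl⟩ | rfl | rfl | rfl) <;> simp_all [Ne.symm (hQI _ _)]

lemma encStateC_sdiff_union (x : M.I) (q : Q) (m1 m2 n : ℕ) :
    (encStateC E x m1 m2 \ {E.σ2 m2, E.σIc x}) ∪ {E.σ2 n, E.σQ q} = encState E q m1 n := by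
  obtain ⟨h12, -, h1C, -, h2I, -, hIC⟩ := E.ranges_disjoint
  ext a
  simp only [encState, encStateC, Set.mem_union, Set.mem_sdiff, Set.mem_insert_iff,
    Set.mem_singleton_iff, Set.mem_range, not_or]
  constructor
  · rintro (⟨(⟨y, rfl⟩ | rfl | rfl | rfl), hne⟩ | rfl | rfl) <;> simp_all
  · rintro (⟨y, rfl⟩ | rfl | rfl | rfl) <;> simp_all [Ne.symm (h2I _ _)]

end Encoding

theorem decrement_second_counter_simulated_general {Q α : Type*}
    (M : Minsky Q) (E : Encoding M α) (q1 q2 q3 : Q)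
    (hx : (q1, 2, q2, some q3) ∈ M.I) (m1 : ℕ) (m2 : ℕ) (hm2 : 1 ≤ m2)
    (Ax : Set α) :
    E.toAPA.Trans Ax (encState E q1 m1 m2)
      (encStateC E ⟨(q1, 2, q2, some q3), hx⟩ m1 m2) ∧
    E.toAPA.Trans Ax (encStateC E ⟨(q1, 2, q2, some q3), hx⟩ m1 m2)
      (encState E q3 m1 (m2 - 1)) := by
  set x : M.I := ⟨(q1, 2, q2, some q3), hx⟩
  have hR := E.R_empty
  constructor
  · rw [← E.encState_sdiff_union q1 x]
    exact APA.trans_of_mem_gamma <| APA.mk_mem_gamma_of_R_empty hR (E.instr_mem_Rp x)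
      (Or.inl ⟨x, rfl⟩) (Or.inr (Or.inl rfl))
  · rw [← E.encStateC_sdiff_union x q3 m1 m2]
    have hC : E.σIc x ∈ encStateC E x m1 m2 := Or.inr (Or.inl rfl)
    have h2 : E.σ2 m2 ∈ encStateC E x m1 m2 := Or.inr (Or.inr (Or.inr rfl))
    exact APA.trans_of_mem_gamma_of_mem_gamma
      (APA.mk_mem_gamma_of_R_empty hR (E.counter_dec_mem_Rp (x := x) rfl hm2) hC h2)
      (APA.mk_mem_gamma_of_R_empty hR (E.state_dec_mem_Rp (x := x) rfl hm2) h2 hC)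

/-- simulation of the decrement instruction `(q1, 2, q2, q3)`
on the second counter (when `m2 ≥ 1`) by two consecutive APA transitions. -/
theorem decrement_second_counter_simulated {Q α : Type*} [Finite Q]
    (M : Minsky Q) (E : Encoding M α) (q1 q2 q3 : Q)
    (hx : (q1, 2, q2, some q3) ∈ M.I) (m1 : ℕ) (m2 : ℕ) (hm2 : 1 ≤ m2)
    (Ax : Set α) :
    E.toAPA.Trans Ax (encState E q1 m1 m2)
      (encStateC E ⟨(q1, 2, q2, some q3), hx⟩ m1 m2) ∧
    E.toAPA.Trans Ax (encStateC E ⟨(q1, 2, q2, some q3), hx⟩ m1 m2)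
      (encState E q3 m1 (m2 - 1)) :=
  decrement_second_counter_simulated_general M E q1 q2 q3 hx m1 m2 hm2 Ax
end

section
/- Let M be a two-counter Minsky machine with instruction set I and let (A, R, Rp, A0, ↪) be its APA encoding. If x = (q1, 1, q2, q3) ∈ I, then for all m2 ∈ ℕ and every reference set Ax ⊆ A there exist two consecutive APA transitions F(A^I ∪ {σQ(q1), σ1(0), σ2(m2)}) ↪^{Ax} F(A^I ∪ {σIc(x), σ1(0), σ2(m2)}) ↪^{Ax} F(A^I ∪ {σQ(q2), σ1(0), σ2(m2)}), simulating the zero test of the first counter. -/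
/-! Each of the two transitions is effected by a single persuasion: first
`(σI x, σQ q1, σIc x)` of kind (i), then `(σ1 0, σIc x, σQ q2)` of kind (vi). Since the
attack relation is empty, every persuasion whose source and catalyst are visible is
applicable, and it exchanges the catalyst for its target; the disjointness of the ranges of
the `σ`'s guarantees that the catalyst is the only argument of the state that disappears. -/

theorem Set.insert_sdiff_union_insert {α : Type*} {S : Set α} {b c u v : α} (hbS : b ∉ S)
    (hbu : b ≠ u) (hbv : b ≠ v) :
    insert c ((S ∪ {b, u, v}) \ {b}) = S ∪ {c, u, v} := by
  ext a
  by_cases hab : a = b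
  · subst hab
    simp [hbS, hbu, hbv]
  · simp [hab]

namespace APA

variable {α : Type*} (F : APA α)

theorem neg_singleton {A1 : Set α} {a b c : α} (ha : a ∈ A1) (hb : b ∈ A1) :
    neg A1 {(a, some b, c)} = {b} := by
  ext d
  simp only [neg, Set.mem_ofPred_eq, Set.mem_singleton_iff, Prod.mk.injEq, Option.some.injEq]
  constructor
  · rintro ⟨-, _, -, _, -, rfl, -⟩
    rfl
  · rintro rfl
    exact ⟨hb, a, ha, c, rfl, rfl, rfl⟩

theorem pos_singleton {A1 : Set α} {a b c : α} (ha : a ∈ A1) (hb : b ∈ A1) :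
    pos A1 {(a, some b, c)} = {c} := by
  ext d
  simp only [pos, Set.mem_ofPred_eq, Set.mem_singleton_iff, Prod.mk.injEq]
  constructor
  · rintro ⟨_, -, _, -, -, -, rfl⟩
    rfl
  · rintro rfl
    exact ⟨a, ha, some b, by simpa using hb, rfl, rfl, rfl⟩

theorem trans_of_mem_Rp {Ax A1 : Set α} {a b c : α} (hRp : (a, some b, c) ∈ F.Rp)
    (ha : a ∈ A1) (hb : b ∈ A1) (hAx : ∀ d ∈ Ax, ¬ F.Attacks A1 d a) :
    F.Trans Ax A1 (insert c (A1 \ {b})) := by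
  refine ⟨{(a, some b, c)}, Set.singleton_nonempty _, ?_, ?_⟩
  · rintro t rfl
    exact ⟨hRp, ha, by simpa using hb, hAx⟩
  · rw [neg_singleton ha hb, pos_singleton ha hb, Set.union_singleton]

end APA

namespace Encoding

open Set

variable {Q α : Type*} {M : Minsky Q} (E : Encoding M α)

theorem not_attacks (A1 : Set α) (a b : α) : ¬ E.toAPA.Attacks A1 a b := by
  rintro ⟨-, -, hR⟩
  simp [E.R_empty] at hR

theorem disjoint_range_pairs :
    Disjoint (range E.σ1) (range E.σQ) ∧ Disjoint (range E.σ1) (range E.σIc) ∧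
    Disjoint (range E.σ2) (range E.σQ) ∧ Disjoint (range E.σ2) (range E.σIc) ∧
    Disjoint (range E.σQ) (range E.σI) ∧ Disjoint (range E.σI) (range E.σIc) := by
  have h := E.disjoint_ranges
  simp only [List.pairwise_cons, List.mem_cons, List.not_mem_nil, or_false,
    forall_eq_or_imp, forall_eq] at h
  tauto

theorem σ1_ne_σQ (n : ℕ) (q : Q) : E.σ1 n ≠ E.σQ q :=
  disjoint_range_iff.mp E.disjoint_range_pairs.1 n q

theorem σ1_ne_σIc (n : ℕ) (y : M.I) : E.σ1 n ≠ E.σIc y :=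
  disjoint_range_iff.mp E.disjoint_range_pairs.2.1 n y

theorem σ2_ne_σQ (n : ℕ) (q : Q) : E.σ2 n ≠ E.σQ q :=
  disjoint_range_iff.mp E.disjoint_range_pairs.2.2.1 n q

theorem σ2_ne_σIc (n : ℕ) (y : M.I) : E.σ2 n ≠ E.σIc y :=
  disjoint_range_iff.mp E.disjoint_range_pairs.2.2.2.1 n y

theorem σQ_notMem_range_σI (q : Q) : E.σQ q ∉ range E.σI := by
  rintro ⟨y, hy⟩
  exact disjoint_range_iff.mp E.disjoint_range_pairs.2.2.2.2.1 q y hy.symm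

theorem σIc_notMem_range_σI (y : M.I) : E.σIc y ∉ range E.σI := by
  rintro ⟨z, hz⟩
  exact disjoint_range_iff.mp E.disjoint_range_pairs.2.2.2.2.2 z y hz

theorem trans_encState_encStateC (Ax : Set α) (x : M.I) (m1 m2 : ℕ) :
    E.toAPA.Trans Ax (encState E x.val.1 m1 m2) (encStateC E x m1 m2) := by
  have hRp : (E.σI x, some (E.σQ x.val.1), E.σIc x) ∈ E.Rp := by
    rw [E.Rp_spec]
    exact Or.inl ⟨x, rfl⟩
  have h := E.trans_of_mem_Rp hRp (Ax := Ax) (A1 := encState E x.val.1 m1 m2)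
    (Or.inl (mem_range_self x)) (Or.inr (Or.inl rfl)) (fun d _ => E.not_attacks _ d _)
  rwa [encState, insert_sdiff_union_insert (E.σQ_notMem_range_σI _)
    (E.σ1_ne_σQ m1 _).symm (E.σ2_ne_σQ m2 _).symm] at h

theorem trans_encStateC_zero_encState (Ax : Set α) {q1 q2 q3 : Q}
    (hx : (q1, 1, q2, some q3) ∈ M.I) (m2 : ℕ) :
    E.toAPA.Trans Ax (encStateC E ⟨(q1, 1, q2, some q3), hx⟩ 0 m2) (encState E q2 0 m2) := by
  set x : M.I := ⟨(q1, 1, q2, some q3), hx⟩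
  have hRp : (E.σ1 0, some (E.σIc x), E.σQ q2) ∈ E.Rp := by
    rw [E.Rp_spec]
    exact Or.inr <| Or.inr <| Or.inr <| Or.inr <| Or.inr ⟨x, q3, rfl, rfl⟩
  have h := E.trans_of_mem_Rp hRp (Ax := Ax) (A1 := encStateC E x 0 m2)
    (Or.inr (Or.inr (Or.inl rfl))) (Or.inr (Or.inl rfl)) (fun d _ => E.not_attacks _ d _)
  rwa [encStateC, insert_sdiff_union_insert (E.σIc_notMem_range_σI x)
    (E.σ1_ne_σIc 0 x).symm (E.σ2_ne_σIc m2 x).symm] at h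

end Encoding

theorem zero_test_first_counter_simulated_general {Q α : Type*}
    (M : Minsky Q) (E : Encoding M α) (q1 q2 q3 : Q)
    (hx : (q1, 1, q2, some q3) ∈ M.I) (m2 : ℕ) (Ax : Set α) :
    E.toAPA.Trans Ax (encState E q1 0 m2)
      (encStateC E ⟨(q1, 1, q2, some q3), hx⟩ 0 m2) ∧
    E.toAPA.Trans Ax (encStateC E ⟨(q1, 1, q2, some q3), hx⟩ 0 m2)
      (encState E q2 0 m2) :=
  ⟨E.trans_encState_encStateC Ax ⟨(q1, 1, q2, some q3), hx⟩ 0 m2,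
    E.trans_encStateC_zero_encState Ax hx m2⟩

/-- simulation of the zero test of the first counter for the
instruction `(q1, 1, q2, q3)` by two consecutive APA transitions. -/
theorem zero_test_first_counter_simulated {Q α : Type*} [Finite Q]
    (M : Minsky Q) (E : Encoding M α) (q1 q2 q3 : Q)
    (hx : (q1, 1, q2, some q3) ∈ M.I) (m2 : ℕ) (Ax : Set α) :
    E.toAPA.Trans Ax (encState E q1 0 m2)
      (encStateC E ⟨(q1, 1, q2, some q3), hx⟩ 0 m2) ∧
    E.toAPA.Trans Ax (encStateC E ⟨(q1, 1, q2, some q3), hx⟩ 0 m2)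
      (encState E q2 0 m2) :=
  zero_test_first_counter_simulated_general M E q1 q2 q3 hx m2 Ax
end
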